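/- arXiv:2106.11560 — 2 statements merged into one kernel-verified Lean document; each statement's English description precedes it below -/
import Mathlib

section
/- Let G be a semi-Markovian DAG satisfying Assumption 1. Let x_t ∈ X^(o) be a node with a directed edge x_t → t. Let G_e be the sub-sampled graph built from x_t and an arbitrary subset V_0 ⊆ {t}, and let Z ⊆ X^(o) \ {x_t}. If Z satisfies the back-door criterion relative to (t, y) in G, then e and y are d-separated by Z ∪ {t} in G_e. -/
namespace CausalDAG

variable {V : Type*}

/-- Adjacency: an edge between `u` and `v` in either direction. -/
def Adj (E : V → V → Prop) (u v : V) : Prop := E u v ∨ E v u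

/-- `d` is a descendant of `v`: there is a directed path from `v` to `d`. -/
def Descendant (E : V → V → Prop) (v d : V) : Prop := Relation.TransGen E v d

/-- The directed graph with edge relation `E` is acyclic. -/
def Acyclic (E : V → V → Prop) : Prop := ∀ v, ¬ Relation.TransGen E v v

/-- A path between `a` and `b` in the graph with edge relation `E`:
a sequence of at least two distinct nodes, starting at `a`, ending at `b`,
with consecutive nodes joined by an edge (in either direction). -/
structure GPath (E : V → V → Prop) (a b : V) where
  nodes : List V
  nodup : nodes.Nodup
  two_le : 2 ≤ nodes.length
  head_eq : nodes.head? = some a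
  last_eq : nodes.getLast? = some b
  chain : nodes.Chain' (Adj E)

namespace GPath

variable {E : V → V → Prop} {a b : V}

/-- `i` is an interior position of the path. -/
def Interior (p : GPath E a b) (i : ℕ) : Prop := 0 < i ∧ i + 1 < p.nodes.length

/-- The node at interior position `i` is a collider on the path: both adjacent
edges of the path point into it. -/
def ColliderAt (p : GPath E a b) (i : ℕ) : Prop :=
  ∃ x v z, p.nodes[i - 1]? = some x ∧ p.nodes[i]? = some v ∧
    p.nodes[i + 1]? = some z ∧ E x v ∧ E z v

/-- The path is blocked by the set `S`. -/
def BlockedBy (p : GPath E a b) (S : Set V) : Prop :=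
  ∃ i v, p.Interior i ∧ p.nodes[i]? = some v ∧
    ((¬ p.ColliderAt i ∧ v ∈ S) ∨
      (p.ColliderAt i ∧ v ∉ S ∧ ∀ d, Descendant E v d → d ∉ S))

/-- The path contains the directed edge `u → v` as one of its steps. -/
def UsesEdge (p : GPath E a b) (u v : V) : Prop :=
  E u v ∧ ∃ i, (p.nodes[i]? = some u ∧ p.nodes[i + 1]? = some v) ∨
    (p.nodes[i]? = some v ∧ p.nodes[i + 1]? = some u)

/-- The path contains an edge pointing into its first endpoint. -/
def IntoFirst (p : GPath E a b) : Prop :=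
  ∃ w, p.nodes[1]? = some w ∧ E w a

end GPath

/-- `a` and `b` are d-separated by `S`: every path between them is blocked by `S`. -/
def DSep (E : V → V → Prop) (a b : V) (S : Set V) : Prop :=
  ∀ p : GPath E a b, p.BlockedBy S

/-- `Z` satisfies the back-door criterion relative to `(t, y)`: no node of `Z` is a
descendant of `t`, and `Z` blocks every path between `t` and `y` containing an edge
pointing into `t`. -/
def BackDoor (E : V → V → Prop) (t y : V) (Z : Set V) : Prop :=
  (∀ z ∈ Z, ¬ Descendant E t z) ∧
  ∀ p : GPath E t y, p.IntoFirst → p.BlockedBy Z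

/-- A semi-Markovian DAG: observed features `Xo`, unobserved features `Xu`,
treatment `t`, outcome `y`; unobserved nodes have no parents and at most two
children. -/
structure SemiMarkov (V : Type*) where
  E : V → V → Prop
  Xo : Set V
  Xu : Set V
  t : V
  y : V
  acyclic : Acyclic E
  t_ne_y : t ≠ y
  t_notin : t ∉ Xo ∪ Xu
  y_notin : y ∉ Xo ∪ Xu
  disjoint : Disjoint Xo Xu
  cover : ∀ v, v ∈ Xo ∨ v ∈ Xu ∨ v = t ∨ v = y
  unobs_no_parents : ∀ u ∈ Xu, ∀ w, ¬ E w u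
  unobs_children : ∀ u ∈ Xu, ∃ a b, ∀ c, E u c → c = a ∨ c = b

/-- Assumption 1: `y` is the only child of `t`, and `y` has no children. -/
def Assumption1 (M : SemiMarkov V) : Prop :=
  M.E M.t M.y ∧ (∀ w, M.E M.t w → w = M.y) ∧ ∀ w, ¬ M.E M.y w

/-- Edge relation of the sub-sampled graph `G_e`: a new node `e` (represented by
`none`) is added, together with the edge `x_t → e` and an edge `v → e` for each
`v ∈ V0`. -/
def subEdge (E : V → V → Prop) (xt : V) (V0 : Set V) :
    Option V → Option V → Prop
  | some u, some v => E u v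
  | some u, none => u = xt ∨ u ∈ V0
  | none, _ => False

end CausalDAG

/-!
Suppose a path `e ← u ~ ⋯ ~ y` of the sub-sampled graph is open given `Z ∪ {t}`. The edge `u → e`
makes `u` a non-collider, so `u ∉ Z ∪ {t}`, whence `u = x_t`, and `x_t ~ ⋯ ~ y` is a path of `G`
open given `Z ∪ {t}`. Call a node good if it reaches `t` along a directed path whose nodes other
than `t` avoid `Z`; `x_t` is good through the edge `x_t → t`. Let `v` be the last good node of the
path. Prepending to the part of the path after `v` the reversed directed path `t ← ⋯ ← v` gives a
path from `t` to `y`: it is simple since the later nodes of the original path are not good, its new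
interior nodes are non-colliders outside `Z`, and a later collider open given `Z ∪ {t}` but not
given `Z` would be good. If `v = t`, the node `t` is an open collider of the original path, so the
new path enters `t` in every case: it is a back-door path open given `Z`, contradicting the
criterion.
-/

namespace List

variable {α : Type*}

theorem triple_infix_iff {x v z : α} {l : List α} :
    [x, v, z] <:+: l ↔ ∃ i, l[i]? = some x ∧ l[i + 1]? = some v ∧ l[i + 2]? = some z := by
  rw [infix_iff_getElem?]
  constructor
  · rintro ⟨k, -, h⟩
    exact ⟨k, by simpa using h 0 (by simp), by simpa [Nat.add_comm] using h 1 (by simp),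
      by simpa [Nat.add_comm] using h 2 (by simp)⟩
  · rintro ⟨k, hx, hv, hz⟩
    refine ⟨k, ?_, fun i hi => ?_⟩
    · have := (getElem?_eq_some_iff.1 hz).1
      simp only [length_cons, length_nil]
      omega
    · simp only [length_cons, length_nil] at hi
      interval_cases i <;> simp_all [Nat.add_comm]

theorem infix_of_cons_infix_cons {x a : α} {l₁ l₂ : List α} (h : x :: l₁ <:+: a :: l₂) :
    l₁ <:+: l₂ := by
  rcases infix_cons_iff.1 h with h | h
  · exact (cons_prefix_cons.1 h).2.isInfix
  · exact (suffix_cons x l₁).isInfix.trans h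

theorem exists_cons_suffix_forall_not {p : α → Prop} {l : List α} (h : ∃ a ∈ l, p a) :
    ∃ a rest, a :: rest <:+ l ∧ p a ∧ ∀ b ∈ rest, ¬ p b := by
  induction l with
  | nil => simp at h
  | cons a l ih =>
    by_cases hl : ∃ b ∈ l, p b
    · obtain ⟨b, rest, hsuf, hb⟩ := ih hl
      exact ⟨b, rest, hsuf.trans (suffix_cons a l), hb⟩
    · push Not at hl
      obtain ⟨b, hb, hpb⟩ := h
      rcases mem_cons.1 hb with rfl | hb
      · exact ⟨b, l, suffix_refl _, hpb, hl⟩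
      · exact absurd hpb (hl b hb)

theorem exists_cons_cons_suffix {a : α} {l rest : List α} (h : a :: rest <:+ l)
    (ha : l.head? ≠ some a) : ∃ b, b :: a :: rest <:+ l := by
  obtain ⟨s, rfl⟩ := h
  rcases s.eq_nil_or_concat with rfl | ⟨s, b, rfl⟩
  · simp at ha
  · exact ⟨b, s, by simp⟩

theorem exists_eq_map_some {l : List (Option α)} (h : none ∉ l) :
    ∃ l' : List α, l = l'.map some := by
  induction l with
  | nil => exact ⟨[], rfl⟩
  | cons a l ih =>
    obtain ⟨l', rfl⟩ := ih fun hl => h (mem_cons_of_mem _ hl)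
    obtain ⟨a, rfl⟩ := Option.ne_none_iff_exists'.1 fun ha => h (ha ▸ mem_cons_self)
    exact ⟨a :: l', rfl⟩

end List

namespace CausalDAG

variable {V : Type*} {E : V → V → Prop}

def Blocks (E : V → V → Prop) (S : Set V) (x v z : V) : Prop :=
  (¬ (E x v ∧ E z v) ∧ v ∈ S) ∨ ((E x v ∧ E z v) ∧ v ∉ S ∧ ∀ d, Descendant E v d → d ∉ S)

def DConnecting (E : V → V → Prop) (S : Set V) (l : List V) : Prop :=
  ∀ x v z, [x, v, z] <:+: l → ¬ Blocks E S x v z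

namespace GPath

variable {a b : V} {p : GPath E a b}

theorem colliderAt_iff {i : ℕ} {x v z : V} (hx : p.nodes[i]? = some x)
    (hv : p.nodes[i + 1]? = some v) (hz : p.nodes[i + 2]? = some z) :
    p.ColliderAt (i + 1) ↔ E x v ∧ E z v := by
  simp [ColliderAt, hx, hv, hz]

theorem blockedBy_iff {S : Set V} :
    p.BlockedBy S ↔ ∃ x v z, [x, v, z] <:+: p.nodes ∧ Blocks E S x v z := by
  simp only [List.triple_infix_iff]
  constructor
  · rintro ⟨i, v, ⟨hi, hlen⟩, hv, hblock⟩
    obtain ⟨k, rfl⟩ : ∃ k, i = k + 1 := ⟨i - 1, by omega⟩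
    have hx := List.getElem?_eq_getElem (l := p.nodes) (i := k) (by omega)
    have hz := List.getElem?_eq_getElem (l := p.nodes) (i := k + 2) (by omega)
    exact ⟨_, v, _, ⟨k, hx, hv, hz⟩, by rwa [Blocks, ← colliderAt_iff hx hv hz]⟩
  · rintro ⟨x, v, z, ⟨k, hx, hv, hz⟩, hblock⟩
    have hlen := (List.getElem?_eq_some_iff.1 hz).1
    exact ⟨k + 1, v, ⟨k.succ_pos, hlen⟩, hv, by rwa [colliderAt_iff hx hv hz]⟩

theorem not_blockedBy_iff {S : Set V} : ¬ p.BlockedBy S ↔ DConnecting E S p.nodes := by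
  simp [blockedBy_iff, DConnecting]

end GPath

section DConnecting

variable {S : Set V}

theorem DConnecting.of_infix {l l' : List V} (h : DConnecting E S l) (hl : l' <:+: l) :
    DConnecting E S l' :=
  fun x v z hxvz => h x v z (hxvz.trans hl)

theorem DConnecting.cons {x v : V} {l : List V} (h : DConnecting E S (v :: l))
    (hx : ∀ z ∈ l.head?, ¬ Blocks E S x v z) : DConnecting E S (x :: v :: l) := by
  intro x' v' z' hinfix
  rcases List.infix_cons_iff.1 hinfix with hpre | hinfix
  · cases l with
    | nil => simp at hpre
    | cons z l =>
      obtain ⟨rfl, rfl, rfl⟩ : x' = x ∧ v' = v ∧ z' = z := by simpa using hpre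
      exact hx _ rfl
  · exact h x' v' z' hinfix

end DConnecting

def ReachAvoiding (E : V → V → Prop) (Z : Set V) : V → V → Prop :=
  Relation.ReflTransGen (fun a b => E a b ∧ a ∉ Z)

section BackDoorPath

variable {Z : Set V} {t y : V}

theorem reachAvoiding_of_descendant {a : V} (ha : a ∉ Z)
    (hdesc : ∀ d, Descendant E a d → d ∉ Z) (hat : Descendant E a t) :
    ReachAvoiding E Z a t := by
  induction hat using Relation.TransGen.head_induction_on with
  | single hat => exact .single ⟨hat, ha⟩
  | head hab _ ih =>
    exact .head ⟨hab, ha⟩ (ih (hdesc _ (.single hab)) fun d hd => hdesc d (.head hab hd))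

theorem blocks_union_singleton {x v z : V} (h : Blocks E Z x v z)
    (hv : ¬ ReachAvoiding E Z v t) : Blocks E (Z ∪ {t}) x v z := by
  rcases h with ⟨hnc, hvZ⟩ | ⟨hc, hvZ, hdesc⟩
  · exact .inl ⟨hnc, .inl hvZ⟩
  · refine .inr ⟨hc, ?_, fun d hd hdS => ?_⟩
    · rintro (hvZ' | rfl)
      exacts [hvZ hvZ', hv .refl]
    · rcases hdS with hdZ | rfl
      exacts [hdesc d hd hdZ, hv (reachAvoiding_of_descendant hvZ hdesc hd)]

/-- Nodes of the directed path are prepended one at a time; `hfresh` keeps the result simple, as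
each prepended node reaches `t` and is a proper descendant of all nodes prepended before it. -/
theorem exists_backDoor_path_of_reachAvoiding (hE : Acyclic E) (hty : t ≠ y) {a : V}
    (ha : ReachAvoiding E Z a t) {l : List V} (hnd : (a :: l).Nodup)
    (hch : (a :: l).IsChain (Adj E)) (hlast : (a :: l).getLast? = some y)
    (hconn : DConnecting E Z (a :: l)) (hinto : a = t → ∀ w ∈ l.head?, E w t)
    (hfresh : ∀ w ∈ l, ¬ ReachAvoiding E Z w t ∨ Relation.TransGen E w a) :
    ∃ p : GPath E t y, p.IntoFirst ∧ ¬ p.BlockedBy Z := by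
  induction ha using Relation.ReflTransGen.head_induction_on generalizing l with
  | refl =>
    obtain ⟨w, l, rfl⟩ : ∃ w l', l = w :: l' := by
      cases l with
      | nil => exact absurd (by simpa using hlast) hty
      | cons w l => exact ⟨w, l, rfl⟩
    exact ⟨⟨t :: w :: l, hnd, by simp, rfl, hlast, hch⟩, ⟨w, rfl, hinto rfl w rfl⟩,
      GPath.not_blockedBy_iff.2 hconn⟩
  | @head a b hab hbt ih =>
    have hba : ¬ Relation.TransGen E b a := fun h => hE a (.head hab.1 h)
    refine ih (l := a :: l) ?_ (hch.cons_cons (.inr hab.1)) (by simpa using hlast) ?_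
      (by rintro rfl _ ⟨⟩; exact hab.1) ?_
    · refine List.nodup_cons.2 ⟨fun hb => ?_, hnd⟩
      rcases List.mem_cons.1 hb with rfl | hb
      · exact hba (.single hab.1)
      · exact (hfresh b hb).elim (· hbt) hba
    · refine hconn.cons fun z _ hblock => ?_
      rcases hblock with ⟨-, haZ⟩ | ⟨⟨hba', -⟩, -⟩
      · exact hab.2 haZ
      · exact hba (.single hba')
    · intro w hw
      rcases List.mem_cons.1 hw with rfl | hw
      · exact .inr (.single hab.1)
      · exact (hfresh w hw).imp_right (·.tail hab.1)

theorem exists_backDoor_path_of_dConnecting (hE : Acyclic E) (hty : t ≠ y) {x : V}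
    (hxt : E x t) (hxZ : x ∉ Z) {l : List V} (hnd : l.Nodup) (hch : l.IsChain (Adj E))
    (hhead : l.head? = some x) (hlast : l.getLast? = some y)
    (hconn : DConnecting E (Z ∪ {t}) l) :
    ∃ p : GPath E t y, p.IntoFirst ∧ ¬ p.BlockedBy Z := by
  obtain ⟨v, rest, hsuf, hv, hrest⟩ := List.exists_cons_suffix_forall_not
    (p := fun w => ReachAvoiding E Z w t) ⟨x, List.mem_of_mem_head? hhead, .single ⟨hxt, hxZ⟩⟩
  refine exists_backDoor_path_of_reachAvoiding hE hty hv (hnd.sublist hsuf.sublist)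
    (hch.suffix hsuf) ?_ ?_ ?_ fun w hw => .inl (hrest w hw)
  · rw [List.getLast?_eq_some_getLast (List.cons_ne_nil v rest), hsuf.getLast,
      ← List.getLast?_eq_some_getLast, hlast]
  · intro a w c hawc hblock
    have hw : w ∈ rest := (List.infix_of_cons_infix_cons hawc).subset (by simp)
    exact hconn a w c (hawc.trans hsuf.isInfix) (blocks_union_singleton hblock (hrest w hw))
  · rintro rfl w hw
    have hxv : x ≠ v := fun h => hE x (.single (h ▸ hxt))
    obtain ⟨u, hu⟩ := List.exists_cons_cons_suffix hsuf (by simpa [hhead] using hxv)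
    obtain ⟨rest, rfl⟩ := List.head?_eq_some_iff.1 hw
    have huvw : [u, v, w] <:+: l := (List.prefix_append [u, v, w] rest).isInfix.trans hu.isInfix
    by_contra hwv
    exact hconn u v w huvw (.inl ⟨fun h => hwv h.2, .inr rfl⟩)

end BackDoorPath

section SubSampled

variable {xt : V} {V0 : Set V}

theorem descendant_of_descendant_subEdge {v d : V}
    (h : Descendant (subEdge E xt V0) (some v) (some d)) : Descendant E v d := by
  generalize hd : some d = b at h
  induction h generalizing d with
  | single hvb => subst hd; exact .single hvb
  | @tail b _ _ hbd ih =>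
    subst hd
    cases b with
    | none => exact hbd.elim
    | some b => exact .tail (ih rfl) hbd

theorem blocks_subEdge {S : Set V} {x v z : V} (h : Blocks E S x v z) :
    Blocks (subEdge E xt V0) (some '' S) (some x) (some v) (some z) := by
  rcases h with ⟨hnc, hvS⟩ | ⟨hc, hvS, hdesc⟩
  · exact .inl ⟨hnc, Set.mem_image_of_mem some hvS⟩
  · refine .inr ⟨hc, (Option.some_injective V).mem_set_image.not.2 hvS, ?_⟩
    rintro _ hd ⟨d, hdS, rfl⟩
    exact hdesc d (descendant_of_descendant_subEdge hd) hdS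

theorem DConnecting.of_map_some {S : Set V} {l : List V}
    (h : DConnecting (subEdge E xt V0) (some '' S) (l.map some)) : DConnecting E S l :=
  fun _ _ _ hxvz hblock => h _ _ _ (hxvz.map some) (blocks_subEdge hblock)

theorem GPath.exists_nodes_eq_none_cons_map_some {y : V}
    (p : GPath (subEdge E xt V0) none (some y)) :
    ∃ l : List V, p.nodes = none :: l.map some ∧ l.Nodup ∧ l.IsChain (Adj E) ∧
      l.getLast? = some y := by
  obtain ⟨rest, hrest⟩ := List.head?_eq_some_iff.1 p.head_eq
  have hnd := p.nodup
  rw [hrest, List.nodup_cons] at hnd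
  obtain ⟨l, rfl⟩ := List.exists_eq_map_some hnd.1
  have hch := p.chain
  have hlast := p.last_eq
  rw [hrest] at hch hlast
  refine ⟨l, hrest, (List.nodup_map_iff (Option.some_injective V)).1 hnd.2,
    (List.isChain_map some).1 hch.tail, ?_⟩
  rw [List.getLast?_cons, List.getLast?_map] at hlast
  cases h : l.getLast? <;> simp_all

end SubSampled

end CausalDAG

open CausalDAG in
theorem stmt1_general {V : Type*} (M : SemiMarkov V)
    (xt : V) (hxt : xt ∈ M.Xo) (hedge : M.E xt M.t)
    (V0 : Set V) (hV0 : V0 ⊆ ({M.t} : Set V))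
    (Z : Set V)
    (hbd : BackDoor M.E M.t M.y Z) :
    DSep (subEdge M.E xt V0) (none : Option V) (some M.y)
      (some '' (Z ∪ {M.t})) := by
  intro p
  by_contra hp
  obtain ⟨l, hl, hnd, hch, hlast⟩ := p.exists_nodes_eq_none_cons_map_some
  have hconn := GPath.not_blockedBy_iff.1 hp
  have hpch := p.chain
  have hplen := p.two_le
  rw [hl] at hconn hpch hplen
  obtain ⟨u, l, rfl⟩ : ∃ u l', l = u :: l' := List.exists_cons_of_ne_nil (by
    rintro rfl
    simp at hplen)
  have hu : u = xt ∨ u = M.t :=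
    ((List.isChain_cons_cons.1 hpch).1.resolve_left fun h => h).imp_right (hV0 ·)
  obtain ⟨w, l, rfl⟩ : ∃ w l', l = w :: l' := List.exists_cons_of_ne_nil (by
    rintro rfl
    obtain rfl : u = M.y := by simpa using hlast
    exact hu.elim (fun h => M.y_notin (.inl (h ▸ hxt))) M.t_ne_y.symm)
  have huS : u ∉ Z ∪ {M.t} := fun huS => hconn _ _ _
    (List.prefix_append [none, some u, some w] _).isInfix
    (.inl ⟨fun h => h.1.elim, Set.mem_image_of_mem some huS⟩)
  obtain rfl : u = xt := hu.resolve_right fun hu => huS (.inr hu)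
  obtain ⟨q, hq, hqZ⟩ := exists_backDoor_path_of_dConnecting M.acyclic M.t_ne_y hedge
    (fun h => huS (.inl h)) hnd hch rfl hlast
    (DConnecting.of_map_some (hconn.of_infix (List.suffix_cons _ _).isInfix))
  exact hqZ (hbd.2 q hq)

open CausalDAG in
/-- necessity, Theorem 2: if `Z` satisfies the back-door criterion,
then `e` and `y` are d-separated by `Z ∪ {t}` in the sub-sampled graph. -/
theorem stmt1 {V : Type*} [Finite V] (M : SemiMarkov V)
    (hA1 : Assumption1 M)
    (xt : V) (hxt : xt ∈ M.Xo) (hedge : M.E xt M.t)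
    (V0 : Set V) (hV0 : V0 ⊆ ({M.t} : Set V))
    (Z : Set V) (hZ : Z ⊆ M.Xo \ {xt})
    (hbd : BackDoor M.E M.t M.y Z) :
    DSep (subEdge M.E xt V0) (none : Option V) (some M.y)
      (some '' (Z ∪ {M.t})) :=
  stmt1_general M xt hxt hedge V0 hV0 Z hbd
end

section
/- Let G be a finite DAG and S a set of nodes of G. Let P_1 be a path from a to c and P_2 be a path from c to b with a ≠ b, such that P_1 and P_2 share no node other than c. Suppose neither P_1 nor P_2 is blocked by S, the last edge of P_1 points into c, the first edge of P_2 points into c (so that c is a collider on the concatenated path), and c ∈ S. Then the concatenation of P_1 and P_2 is a path from a to b in G that is not blocked by S. -/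
/-!
Whether a position blocks a path depends only on the three nodes of the path around it. At every
interior position of the concatenation other than the junction these are the same three nodes as
at the corresponding position of `P1` or of `P2`, which are unblocked; at the junction, `c` is a
collider lying in `S`, so it does not block either.
-/

namespace CausalDAG.GPath

variable {V : Type*} {E : V → V → Prop} {a b c : V}

lemma nodes_eq_cons (p : GPath E a b) : p.nodes = a :: p.nodes.tail :=
  List.eq_cons_of_mem_head? p.head_eq

lemma nodes_eq_dropLast_append (p : GPath E a b) : p.nodes = p.nodes.dropLast ++ [b] :=
  (List.dropLast_append_getLast? b p.last_eq).symm

def append (p : GPath E a c) (q : GPath E c b)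
    (hpq : ∀ v, v ∈ p.nodes → v ∈ q.nodes → v = c) : GPath E a b where
  nodes := p.nodes ++ q.nodes.tail
  nodup := by
    have hq : (c :: q.nodes.tail).Nodup := q.nodes_eq_cons ▸ q.nodup
    refine List.nodup_append'.2 ⟨p.nodup, (List.nodup_cons.1 hq).2, fun v hvp hvq => ?_⟩
    obtain rfl := hpq v hvp (q.nodes_eq_cons ▸ List.mem_cons_of_mem c hvq)
    exact (List.nodup_cons.1 hq).1 hvq
  two_le := p.two_le.trans (List.length_append ▸ Nat.le_add_right ..)
  head_eq := by rw [List.head?_append, p.head_eq]; rfl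
  last_eq := by
    have hq : q.nodes.length ≠ 1 := by have := q.two_le; omega
    rw [List.getLast?_append, List.getLast?_tail, if_neg hq, q.last_eq]
    rfl
  chain := by
    have hq : (c :: q.nodes.tail).IsChain (Adj E) := q.nodes_eq_cons ▸ q.chain
    refine List.isChain_append.2 ⟨p.chain, hq.tail, fun x hx y hy => ?_⟩
    obtain rfl : x = c := Option.some_injective _ (p.last_eq ▸ hx).symm
    exact List.isChain_cons.1 hq |>.1 y hy

def BlocksAt (p : GPath E a b) (S : Set V) (i : ℕ) : Prop :=
  ∃ v, p.nodes[i]? = some v ∧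
    ((¬ p.ColliderAt i ∧ v ∈ S) ∨ (p.ColliderAt i ∧ v ∉ S ∧ ∀ d, Descendant E v d → d ∉ S))

lemma blockedBy_iff_s9 {p : GPath E a b} {S : Set V} :
    p.BlockedBy S ↔ ∃ i, p.Interior i ∧ p.BlocksAt S i :=
  exists_congr fun _ => exists_and_left

section congr

variable {a' b' : V} {p : GPath E a b} {q : GPath E a' b'} {i j : ℕ}

lemma colliderAt_congr (h₀ : p.nodes[i - 1]? = q.nodes[j - 1]?)
    (h₁ : p.nodes[i]? = q.nodes[j]?) (h₂ : p.nodes[i + 1]? = q.nodes[j + 1]?) :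
    p.ColliderAt i ↔ q.ColliderAt j := by
  simp only [ColliderAt, h₀, h₁, h₂]

lemma blocksAt_congr (h₀ : p.nodes[i - 1]? = q.nodes[j - 1]?)
    (h₁ : p.nodes[i]? = q.nodes[j]?) (h₂ : p.nodes[i + 1]? = q.nodes[j + 1]?) (S : Set V) :
    p.BlocksAt S i ↔ q.BlocksAt S j := by
  simp only [BlocksAt, colliderAt_congr h₀ h₁ h₂, h₁]

end congr

lemma not_blocksAt_of_colliderAt {p : GPath E a b} {S : Set V} {i : ℕ} {v : V}
    (hc : p.ColliderAt i) (hv : p.nodes[i]? = some v) (hvS : v ∈ S) : ¬ p.BlocksAt S i := by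
  rintro ⟨w, hw, ⟨hnc, -⟩ | ⟨-, hwS, -⟩⟩
  · exact hnc hc
  · exact hwS (Option.some_injective _ (hw.symm.trans hv) ▸ hvS)

section append

variable (p : GPath E a c) (q : GPath E c b) (hpq : ∀ v, v ∈ p.nodes → v ∈ q.nodes → v = c)

lemma length_append : (p.append q hpq).nodes.length = p.nodes.length + q.nodes.length - 1 := by
  have := q.two_le
  simp only [append, List.length_append, List.length_tail]
  omega

lemma append_nodes_eq_dropLast_append : (p.append q hpq).nodes = p.nodes.dropLast ++ q.nodes := by
  change p.nodes ++ q.nodes.tail = _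
  conv_lhs => rw [p.nodes_eq_dropLast_append]
  conv_rhs => rw [q.nodes_eq_cons]
  simp

lemma getElem?_append_of_lt {k : ℕ} (hk : k < p.nodes.length) :
    (p.append q hpq).nodes[k]? = p.nodes[k]? :=
  List.getElem?_append_left hk

lemma getElem?_append_of_le {k : ℕ} (hk : p.nodes.length - 1 ≤ k) :
    (p.append q hpq).nodes[k]? = q.nodes[k - (p.nodes.length - 1)]? := by
  rw [append_nodes_eq_dropLast_append, List.getElem?_append_right (by simpa using hk),
    List.length_dropLast]

lemma getElem?_append_junction : (p.append q hpq).nodes[p.nodes.length - 1]? = some c := by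
  rw [getElem?_append_of_lt _ _ _ (by have := p.two_le; omega), ← List.getLast?_eq_getElem?,
    p.last_eq]

lemma colliderAt_append (hp : ∃ w, p.nodes[p.nodes.length - 2]? = some w ∧ E w c)
    (hq : ∃ w, q.nodes[1]? = some w ∧ E w c) :
    (p.append q hpq).ColliderAt (p.nodes.length - 1) := by
  obtain ⟨x, hx, hxc⟩ := hp
  obtain ⟨z, hz, hzc⟩ := hq
  have := p.two_le
  refine ⟨x, c, z, ?_, getElem?_append_junction p q hpq, ?_, hxc, hzc⟩
  · rw [getElem?_append_of_lt _ _ _ (by omega), ← hx]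
    rfl
  · rw [getElem?_append_of_le _ _ _ (by omega), ← hz]
    congr 1
    omega

variable {S : Set V} {i : ℕ}

lemma blocksAt_append_iff_left (hi : i + 1 < p.nodes.length) :
    (p.append q hpq).BlocksAt S i ↔ p.BlocksAt S i :=
  blocksAt_congr (getElem?_append_of_lt _ _ _ (by omega))
    (getElem?_append_of_lt _ _ _ (by omega)) (getElem?_append_of_lt _ _ _ hi) S

lemma blocksAt_append_iff_right (hi : p.nodes.length ≤ i) :
    (p.append q hpq).BlocksAt S i ↔ q.BlocksAt S (i - (p.nodes.length - 1)) := by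
  refine blocksAt_congr ?_ ?_ ?_ S <;> rw [getElem?_append_of_le _ _ _ (by omega)] <;>
    congr 1 <;> omega

end append

end CausalDAG.GPath

open CausalDAG in
theorem stmt9_general {V : Type*} (E : V → V → Prop)
    {a b c : V}
    (P1 : GPath E a c) (P2 : GPath E c b) (S : Set V)
    (hshare : ∀ v, v ∈ P1.nodes → v ∈ P2.nodes → v = c)
    (h1 : ¬ P1.BlockedBy S) (h2 : ¬ P2.BlockedBy S)
    (hin1 : ∃ w, P1.nodes[P1.nodes.length - 2]? = some w ∧ E w c)
    (hin2 : ∃ w, P2.nodes[1]? = some w ∧ E w c)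
    (hcS : c ∈ S) :
    ∃ P : GPath E a b, P.nodes = P1.nodes ++ P2.nodes.tail ∧
      ¬ P.BlockedBy S := by
  refine ⟨P1.append P2 hshare, rfl, ?_⟩
  rw [GPath.blockedBy_iff_s9]
  rintro ⟨i, ⟨hi0, hi⟩, hblock⟩
  rw [GPath.length_append] at hi
  rcases lt_trichotomy (i + 1) P1.nodes.length with hlt | hmid | hgt
  · exact h1 (GPath.blockedBy_iff_s9.2
      ⟨i, ⟨hi0, hlt⟩, (GPath.blocksAt_append_iff_left P1 P2 hshare hlt).1 hblock⟩)
  · obtain rfl : i = P1.nodes.length - 1 := by omega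
    exact GPath.not_blocksAt_of_colliderAt (GPath.colliderAt_append P1 P2 hshare hin1 hin2)
      (GPath.getElem?_append_junction P1 P2 hshare) hcS hblock
  · exact h2 (GPath.blockedBy_iff_s9.2 ⟨_, ⟨by omega, by omega⟩,
      (GPath.blocksAt_append_iff_right P1 P2 hshare (by omega)).1 hblock⟩)

open CausalDAG in
/-- concatenating two unblocked paths at a conditioned collider
yields an unblocked path. -/
theorem stmt9 {V : Type*} [Finite V] (E : V → V → Prop) (hac : Acyclic E)
    {a b c : V} (hab : a ≠ b)
    (P1 : GPath E a c) (P2 : GPath E c b) (S : Set V)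
    (hshare : ∀ v, v ∈ P1.nodes → v ∈ P2.nodes → v = c)
    (h1 : ¬ P1.BlockedBy S) (h2 : ¬ P2.BlockedBy S)
    (hin1 : ∃ w, P1.nodes[P1.nodes.length - 2]? = some w ∧ E w c)
    (hin2 : ∃ w, P2.nodes[1]? = some w ∧ E w c)
    (hcS : c ∈ S) :
    ∃ P : GPath E a b, P.nodes = P1.nodes ++ P2.nodes.tail ∧
      ¬ P.BlockedBy S :=
  stmt9_general E P1 P2 S hshare h1 h2 hin1 hin2 hcS
end
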